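/- For any graph G with no isolated vertex and any nontrivial graph H with γ(H)=1 (i.e., H has a universal vertex), there exists a minimum-weight secure (1,0,0)-dominating function f on G∘H with f(V(H_u)) ≤ 2 for every u∈V(G). -/

import Mathlib

namespace SecureW

open Finset

/-- Lexicographic product of simple graphs. -/
def lexProd {α β : Type*} (G : SimpleGraph α) (H : SimpleGraph β) :
    SimpleGraph (α × β) where
  Adj p q := G.Adj p.1 q.1 ∨ (p.1 = q.1 ∧ H.Adj p.2 q.2)
  symm := by
    constructor
    rintro p q (h | ⟨h1, h2⟩)
    · exact Or.inl h.symm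
    · exact Or.inr ⟨h1.symm, h2.symm⟩
  loopless := by
    constructor
    rintro p (h | ⟨_, h⟩)
    · exact G.irrefl h
    · exact H.irrefl h

open scoped Classical in
/-- Sum of `f` over the open neighbourhood of `v`. -/
noncomputable def nbrSum {V : Type*} [Fintype V] (G : SimpleGraph V) (f : V → ℕ) (v : V) : ℕ :=
  ∑ u ∈ Finset.univ.filter (fun u => G.Adj v u), f u

/-- `f` is a `w`-dominating function, where `w` is given as a list `(w_0, …, w_l)`. -/
def IsWDom {V : Type*} [Fintype V] (G : SimpleGraph V) (ws : List ℕ) (f : V → ℕ) : Prop :=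
  (∀ v, f v < ws.length) ∧ ∀ v, ws.getD (f v) 0 ≤ nbrSum G f v

/-- The function obtained from `f` by moving one unit of weight from `u` to `v`. -/
def move {V : Type*} [DecidableEq V] (f : V → ℕ) (u v : V) : V → ℕ :=
  fun x => if x = v then 1 else if x = u then f u - 1 else f x

open scoped Classical in
/-- `f` is a secure `w`-dominating function. -/
def IsSecureWDom {V : Type*} [Fintype V] (G : SimpleGraph V) (ws : List ℕ) (f : V → ℕ) : Prop :=
  IsWDom G ws f ∧ ∀ v, f v = 0 → ∃ u, G.Adj v u ∧ 0 < f u ∧ IsWDom G ws (move f u v)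

/-- The weight of a function. -/
noncomputable def weight {V : Type*} [Fintype V] (f : V → ℕ) : ℕ := ∑ v, f v

/-- The `w`-domination number. -/
noncomputable def wDomNum {V : Type*} [Fintype V] (G : SimpleGraph V) (ws : List ℕ) : ℕ :=
  sInf {k | ∃ f, IsWDom G ws f ∧ weight f = k}

/-- The secure `w`-domination number. -/
noncomputable def secWDomNum {V : Type*} [Fintype V] (G : SimpleGraph V) (ws : List ℕ) : ℕ :=
  sInf {k | ∃ f, IsSecureWDom G ws f ∧ weight f = k}

/-- The (ordinary) domination number, as `γ_{(1,0)}`. -/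
noncomputable def domNum {V : Type*} [Fintype V] (G : SimpleGraph V) : ℕ :=
  wDomNum G [1, 0]

/-- `G` has no isolated vertex. -/
def NoIsolated {V : Type*} (G : SimpleGraph V) : Prop := ∀ v, ∃ u, G.Adj v u

end SecureW

open SecureW

section Helpers

variable {V : Type*} [Fintype V]

lemma exists_of_nbrSum {G : SimpleGraph V} {f : V → ℕ} {v : V}
    (h : 1 ≤ nbrSum G f v) : ∃ u, G.Adj v u ∧ 0 < f u := by
  classical
  by_contra hc
  push_neg at hc
  have h0 : nbrSum G f v = 0 := by
    unfold nbrSum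
    refine Finset.sum_eq_zero fun u hu => ?_
    exact Nat.le_zero.1 (hc u (Finset.mem_filter.1 hu).2)
  omega

lemma nbrSum_of_adj {G : SimpleGraph V} {f : V → ℕ} {v u : V}
    (h : G.Adj v u) (hf : 0 < f u) : 1 ≤ nbrSum G f v := by
  classical
  unfold nbrSum
  calc 1 ≤ f u := hf
  _ ≤ _ := Finset.single_le_sum (f := f) (fun i _ => Nat.zero_le _)
      (Finset.mem_filter.2 ⟨Finset.mem_univ _, h⟩)

lemma isWDom_iff {G : SimpleGraph V} {f : V → ℕ} :
    IsWDom G [1, 0, 0] f ↔ (∀ v, f v ≤ 2) ∧ ∀ v, f v = 0 → ∃ u, G.Adj v u ∧ 0 < f u := by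
  constructor
  · rintro ⟨h1, h2⟩
    refine ⟨fun v => by have := h1 v; simp at this; omega, fun v hv => ?_⟩
    have h := h2 v
    rw [hv] at h
    exact exists_of_nbrSum (by simpa using h)
  · rintro ⟨h1, h2⟩
    refine ⟨fun v => by have := h1 v; simp; omega, fun v => ?_⟩
    have h3 : f v = 0 ∨ f v = 1 ∨ f v = 2 := by have := h1 v; omega
    rcases h3 with h | h | h <;> rw [h]
    · obtain ⟨u, hu, hfu⟩ := h2 v h
      simpa using nbrSum_of_adj hu hfu
    · simp
    · simp

lemma move_tgt [DecidableEq V] (f : V → ℕ) (u v : V) : move f u v v = 1 := by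
  simp [move]

lemma move_src [DecidableEq V] (f : V → ℕ) {u v : V} (h : u ≠ v) :
    move f u v u = f u - 1 := by
  simp [move, h]

lemma move_other [DecidableEq V] (f : V → ℕ) {u v x : V} (h1 : x ≠ v) (h2 : x ≠ u) :
    move f u v x = f x := by
  simp [move, h1, h2]

lemma isWDom_move_of_two [DecidableEq V] {G : SimpleGraph V} {f : V → ℕ}
    (hf : IsWDom G [1, 0, 0] f) {w v : V} (h2 : 2 ≤ f w) :
    IsWDom G [1, 0, 0] (move f w v) := by
  rw [isWDom_iff] at hf ⊢
  obtain ⟨hle, hdom⟩ := hf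
  constructor
  · intro x
    have := hle w; have := hle x
    simp only [move]; split_ifs <;> omega
  · intro x hx
    have hfx : f x = 0 := by
      simp only [move] at hx
      split_ifs at hx <;> omega
    obtain ⟨r, hr, hr0⟩ := hdom x hfx
    refine ⟨r, hr, ?_⟩
    simp only [move]; split_ifs <;> omega

lemma exists_universal {β : Type*} [Fintype β] (H : SimpleGraph β)
    (h1 : domNum H = 1) : ∃ b : β, ∀ y, y ≠ b → H.Adj b y := by
  classical
  have hne : {k | ∃ f, IsWDom H [1, 0] f ∧ weight f = k}.Nonempty := by
    refine ⟨weight (fun _ : β => 1), fun _ => 1, ⟨⟨fun v => by simp, fun v => by simp⟩, rfl⟩⟩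
  have hmem : (1 : ℕ) ∈ {k | ∃ f, IsWDom H [1, 0] f ∧ weight f = k} := by
    have := Nat.sInf_mem hne
    rwa [show sInf {k | ∃ f, IsWDom H [1, 0] f ∧ weight f = k} = domNum H from rfl, h1] at this
  obtain ⟨f, ⟨hlt, hdom⟩, hw⟩ := hmem
  have hex : ∃ b, 0 < f b := by
    by_contra hc; push_neg at hc
    have : weight f = 0 := Finset.sum_eq_zero fun v _ => Nat.le_zero.1 (hc v)
    omega
  obtain ⟨b, hb⟩ := hex
  have hzero : ∀ y, y ≠ b → f y = 0 := by
    intro y hy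
    by_contra hc
    have he := Finset.add_sum_erase Finset.univ f (Finset.mem_univ b)
    have hy' : y ∈ Finset.univ.erase b := Finset.mem_erase.2 ⟨hy, Finset.mem_univ _⟩
    have h2 := Finset.single_le_sum (f := f) (fun i _ => Nat.zero_le _) hy'
    have hww : weight f = ∑ v, f v := rfl
    omega
  refine ⟨b, fun y hy => ?_⟩
  have h0 : f y = 0 := hzero y hy
  have hd := hdom y
  rw [h0] at hd
  obtain ⟨u, hadj, hu⟩ := exists_of_nbrSum (by simpa using hd)
  have : u = b := by by_contra hc; have := hzero u hc; omega
  subst this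
  exact hadj.symm

end Helpers

set_option maxHeartbeats 1000000 in
open SecureW in
theorem stmt_13 {α β : Type*} [Fintype α] [Fintype β]
    (G : SimpleGraph α) (H : SimpleGraph β)
    (hG : NoIsolated G) (hH : Nontrivial β) (h1 : domNum H = 1) :
    ∃ f : α × β → ℕ, IsSecureWDom (lexProd G H) [1, 0, 0] f ∧
      weight f = secWDomNum (lexProd G H) [1, 0, 0] ∧
      ∀ u : α, (∑ y : β, f (u, y)) ≤ 2 := by
  classical
  letI : DecidableEq (α × β) := fun a b => Classical.propDecidable (a = b)
  obtain ⟨b, hb⟩ := exists_universal H h1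
  have hadj : ∀ p q : α × β, (lexProd G H).Adj p q ↔
      (G.Adj p.1 q.1 ∨ (p.1 = q.1 ∧ H.Adj p.2 q.2)) := fun _ _ => Iff.rfl
  have hne : {k | ∃ f, IsSecureWDom (lexProd G H) [1, 0, 0] f ∧ weight f = k}.Nonempty := by
    refine ⟨weight (fun _ : α × β => 2), fun _ => 2,
      ⟨⟨fun v => by simp, fun v => by simp⟩, fun v hv => by simp at hv⟩, rfl⟩
  obtain ⟨f₀, hf₀sec, hf₀w⟩ := Nat.sInf_mem hne
  obtain ⟨hf₀dom, hf₀s⟩ := hf₀sec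
  rw [isWDom_iff] at hf₀dom
  obtain ⟨hf₀le, hf₀d⟩ := hf₀dom
  set col : α → ℕ := fun u => ∑ y, f₀ (u, y) with hcoldef
  set g : α × β → ℕ := fun p => if p.2 = b then min (col p.1) 2 else 0 with hgdef
  -- basic facts about f₀ columns
  have hcol0 : ∀ u, col u = 0 → ∀ y, f₀ (u, y) = 0 := by
    intro u h y
    exact (Finset.sum_eq_zero_iff).1 h y (Finset.mem_univ y)
  have hcolpos : ∀ u (y : β), 0 < f₀ (u, y) → 1 ≤ col u := by
    intro u y hy
    exact le_trans hy (Finset.single_le_sum (f := fun z => f₀ (u, z))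
      (fun i _ => Nat.zero_le _) (Finset.mem_univ y))
  have hcolup : ∀ u (y : β), f₀ (u, y) ≤ col u := by
    intro u y
    exact Finset.single_le_sum (f := fun z => f₀ (u, z)) (fun i _ => Nat.zero_le _)
      (Finset.mem_univ y)
  have hcol2 : ∀ (v : α) (z₁ z₂ : β), z₁ ≠ z₂ → 0 < f₀ (v, z₁) → 0 < f₀ (v, z₂) →
      2 ≤ col v := by
    intro v z₁ z₂ hnz h1' h2'
    have hz : z₂ ∈ Finset.univ.erase z₁ := Finset.mem_erase.2 ⟨hnz.symm, Finset.mem_univ _⟩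
    have he : f₀ (v, z₁) + ∑ x ∈ Finset.univ.erase z₁, f₀ (v, x) = ∑ y, f₀ (v, y) :=
      Finset.add_sum_erase Finset.univ (fun y => f₀ (v, y)) (Finset.mem_univ z₁)
    have hle : f₀ (v, z₂) ≤ ∑ x ∈ Finset.univ.erase z₁, f₀ (v, x) :=
      Finset.single_le_sum (f := fun y => f₀ (v, y)) (fun i _ => Nat.zero_le _) hz
    show 2 ≤ ∑ y, f₀ (v, y)
    omega
  have hstar : ∀ u, col u = 0 → ∃ v, G.Adj u v ∧ 1 ≤ col v := by
    intro u h
    obtain ⟨q, hq, hq0⟩ := hf₀d (u, b) (hcol0 u h b)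
    obtain ⟨qa, qb⟩ := q
    have hq1 : qa ≠ u := by
      rintro rfl
      rw [hcol0 qa h qb] at hq0; omega
    rcases (hadj _ _).1 hq with h' | ⟨h', _⟩
    · exact ⟨qa, h', hcolpos qa qb hq0⟩
    · exact absurd h'.symm hq1
  -- basic facts about g
  have hgb : ∀ u, g (u, b) = min (col u) 2 := fun u => by simp [hgdef]
  have hgnb : ∀ u (y : β), y ≠ b → g (u, y) = 0 := fun u y hy => by simp [hgdef, hy]
  have hgle : ∀ p, g p ≤ 2 := by
    intro p; rw [hgdef]; dsimp only; split_ifs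
    · exact min_le_right _ _
    · exact Nat.zero_le _
  have hgpos : ∀ u, 1 ≤ col u → 0 < g (u, b) := by
    intro u h; rw [hgb]; omega
  -- domination of g
  have hgdom : ∀ p : α × β, g p = 0 → ∃ q, (lexProd G H).Adj p q ∧ 0 < g q := by
    rintro ⟨u, y⟩ hp
    rcases Nat.eq_zero_or_pos (col u) with h | h
    · obtain ⟨v, hv, hv1⟩ := hstar u h
      exact ⟨(v, b), Or.inl hv, hgpos v hv1⟩
    · have hy : y ≠ b := by
        intro he; rw [he, hgb] at hp; omega
      exact ⟨(u, b), Or.inr ⟨rfl, (hb y hy).symm⟩, hgpos u h⟩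
  -- security of g
  have hgsec : ∀ p : α × β, g p = 0 →
      ∃ w, (lexProd G H).Adj p w ∧ 0 < g w ∧ IsWDom (lexProd G H) [1, 0, 0] (move g w p) := by
    rintro ⟨u, y⟩ hp
    rcases Nat.eq_zero_or_pos (col u) with hcu | hcu
    · -- Case C : empty column
      have hfp : f₀ (u, y) = 0 := hcol0 u hcu y
      obtain ⟨q, hqadj, hq0, hqdom⟩ := hf₀s (u, y) hfp
      obtain ⟨v, c⟩ := q
      have hvu : v ≠ u := by
        rintro rfl
        rw [hcol0 v hcu c] at hq0; omega
      have hGuv : G.Adj u v := by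
        rcases (hadj _ _).1 hqadj with h' | ⟨h', _⟩
        · exact h'
        · exact absurd h'.symm hvu
      have hcv : 1 ≤ col v := hcolpos v c hq0
      have hvbne : ((v, b) : α × β) ≠ (u, y) := fun h => hvu (congrArg Prod.fst h)
      have hvcne : ((v, c) : α × β) ≠ (u, y) := fun h => hvu (congrArg Prod.fst h)
      refine ⟨(v, b), Or.inl hGuv, hgpos v hcv, ?_⟩
      rw [isWDom_iff] at hqdom ⊢
      constructor
      · intro x
        have := hgle (v, b); have := hgle x
        simp only [move]; split_ifs <;> omega
      · rintro ⟨w, z⟩ hx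
        have hxp : ((w, z) : α × β) ≠ (u, y) := by
          intro h; rw [h, move_tgt] at hx; omega
        by_cases hwv : w = v
        · subst hwv
          refine ⟨(u, y), Or.inl hGuv.symm, ?_⟩
          rw [move_tgt]; omega
        · have hxvb : ((w, z) : α × β) ≠ (v, b) := fun h => hwv (congrArg Prod.fst h)
          have hgx : g (w, z) = 0 := by rw [move_other g hxp hxvb] at hx; exact hx
          rcases Nat.eq_zero_or_pos (col w) with hcw | hcw
          · -- col w = 0 : use the move of f₀
            have hfx : move f₀ ((v, c) : α × β) (u, y) (w, z) = 0 := by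
              rw [move_other f₀ hxp (fun h => hwv (congrArg Prod.fst h))]
              exact hcol0 w hcw z
            obtain ⟨r, hr, hr0⟩ := hqdom.2 _ hfx
            by_cases hrp : r = ((u, y) : α × β)
            · subst hrp
              refine ⟨(u, y), hr, ?_⟩
              rw [move_tgt]; omega
            · by_cases hrq : r = ((v, c) : α × β)
              · subst hrq
                rw [move_src f₀ hvcne] at hr0
                have h2v : 2 ≤ col v := le_trans (by omega) (hcolup v c)
                have hGwv : G.Adj w v := by
                  rcases (hadj _ _).1 hr with h' | ⟨h', _⟩
                  · exact h'
                  · exact absurd h' hwv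
                refine ⟨(v, b), Or.inl hGwv, ?_⟩
                rw [move_src g hvbne, hgb]; omega
              · rw [move_other f₀ hrp hrq] at hr0
                obtain ⟨ra, rb⟩ := r
                have hraw : ra ≠ w := by
                  rintro rfl
                  rw [hcol0 ra hcw rb] at hr0; omega
                have hGwra : G.Adj w ra := by
                  rcases (hadj _ _).1 hr with h' | ⟨h', _⟩
                  · exact h'
                  · exact absurd h'.symm hraw
                by_cases hrav : ra = v
                · subst hrav
                  have hrbc : rb ≠ c := fun h => hrq (by rw [h])
                  have h2v : 2 ≤ col ra := hcol2 ra rb c hrbc hr0 hq0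
                  refine ⟨(ra, b), Or.inl hGwra, ?_⟩
                  rw [move_src g hvbne, hgb]; omega
                · have hrau : ra ≠ u := by
                    rintro rfl
                    rw [hcol0 ra hcu rb] at hr0; omega
                  refine ⟨(ra, b), Or.inl hGwra, ?_⟩
                  rw [move_other g (fun h => hrau (congrArg Prod.fst h))
                    (fun h => hrav (congrArg Prod.fst h))]
                  exact hgpos ra (hcolpos ra rb hr0)
          · -- col w ≥ 1 : (w,b) still positive
            have hzb : z ≠ b := by
              intro h; subst h; rw [hgb] at hgx; omega
            refine ⟨(w, b), Or.inr ⟨rfl, (hb z hzb).symm⟩, ?_⟩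
            by_cases hwb : ((w, b) : α × β) = (u, y)
            · rw [hwb, move_tgt]; omega
            · rw [move_other g hwb (fun h => hwv (congrArg Prod.fst h))]
              exact hgpos w hcw
    · -- Cases A and B : nonempty column
      have hyb : y ≠ b := by
        intro h; subst h; rw [hgb] at hp; omega
      have hpadj : (lexProd G H).Adj (u, y) (u, b) := Or.inr ⟨rfl, (hb y hyb).symm⟩
      have hubne : ((u, b) : α × β) ≠ (u, y) := fun h => hyb (congrArg Prod.snd h).symm
      rcases Nat.lt_or_ge (col u) 2 with hclt | hc2
      · -- col u = 1
        have hcu1 : col u = 1 := by omega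
        -- key dichotomy
        have hkey : (∃ v, G.Adj u v ∧ 1 ≤ col v) ∨ (∀ z₁ z₂ : β, z₁ ≠ z₂ → H.Adj z₁ z₂) := by
          by_cases hS : ∃ v, G.Adj u v ∧ 1 ≤ col v
          · exact Or.inl hS
          push_neg at hS
          right
          -- the unique positive vertex in the column
          have hex : ∃ c, 0 < f₀ (u, c) := by
            by_contra hc; push_neg at hc
            have : col u = 0 := Finset.sum_eq_zero fun z _ => Nat.le_zero.1 (hc z)
            omega
          obtain ⟨c, hc⟩ := hex
          have hcuniq : ∀ z, z ≠ c → f₀ (u, z) = 0 := by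
            intro z hz
            by_contra hcc
            have := hcol2 u z c hz (Nat.pos_of_ne_zero hcc) hc
            omega
          have hfc1 : f₀ (u, c) = 1 := by
            have := hcolup u c; omega
          have huniv : ∀ z, z ≠ c → ∀ z', z' ≠ z → H.Adj z' z := by
            intro z hz z' hz'
            obtain ⟨q, hqadj, hq0, hqdom⟩ := hf₀s (u, z) (hcuniq z hz)
            obtain ⟨qa, qb⟩ := q
            have hqa : qa = u := by
              by_contra hne'
              rcases (hadj _ _).1 hqadj with h' | ⟨h', _⟩
              · have := hS qa h'
                have := hcolpos qa qb hq0
                omega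
              · exact hne' h'.symm
            subst hqa
            have hqb : qb = c := by
              by_contra hne'
              rw [hcuniq qb hne'] at hq0; omega
            subst hqb
            have hczne : ((qa, qb) : α × β) ≠ (qa, z) := fun h => hz ((congrArg Prod.snd h).symm)
            rw [isWDom_iff] at hqdom
            have hfz' : move f₀ ((qa, qb) : α × β) (qa, z) (qa, z') = 0 := by
              have hxz : ((qa, z') : α × β) ≠ (qa, z) := fun h => hz' (congrArg Prod.snd h)
              by_cases hxc : z' = qb
              · subst hxc
                rw [move_src f₀ hczne]; omega
              · rw [move_other f₀ hxz (fun h => hxc (congrArg Prod.snd h))]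
                exact hcuniq z' hxc
            obtain ⟨r, hr, hr0⟩ := hqdom.2 _ hfz'
            by_cases hrz : r = ((qa, z) : α × β)
            · subst hrz
              rcases (hadj (qa, z') (qa, z)).1 hr with h' | ⟨_, h'⟩
              · exact absurd h' G.irrefl
              · exact h'
            · exfalso
              by_cases hrc : r = ((qa, qb) : α × β)
              · subst hrc
                rw [move_src f₀ hczne] at hr0; omega
              · rw [move_other f₀ hrz hrc] at hr0
                obtain ⟨ra, rb⟩ := r
                by_cases hru : ra = qa
                · subst hru
                  have hrbc : rb = qb := by
                    by_contra hnc
                    rw [hcuniq rb hnc] at hr0; omega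
                  exact hrc (by rw [hrbc])
                · rcases (hadj (qa, z') (ra, rb)).1 hr with h' | ⟨h'', _⟩
                  · have := hS ra h'
                    have := hcolpos ra rb hr0
                    omega
                  · exact hru h''.symm
          -- completeness
          intro z₁ z₂ hz12
          by_cases h2c : z₂ = c
          · subst h2c
            exact (huniv z₁ hz12 z₂ (Ne.symm hz12)).symm
          · exact huniv z₂ h2c z₁ hz12
        -- the witness is (u, b)
        refine ⟨(u, b), hpadj, hgpos u (by omega), ?_⟩
        rw [isWDom_iff]
        constructor
        · intro x
          have := hgle (u, b); have := hgle x
          simp only [move]; split_ifs <;> omega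
        · rintro ⟨w, z⟩ hx
          have hxp : ((w, z) : α × β) ≠ (u, y) := by
            intro h; rw [h, move_tgt] at hx; omega
          by_cases hwu : w = u
          · subst hwu
            by_cases hzb' : z = b
            · subst hzb'
              refine ⟨(w, y), hpadj.symm, ?_⟩
              rw [move_tgt]; omega
            · rcases hkey with ⟨v, hGuv, hcv⟩ | hcomp
              · have hvu : v ≠ w := by
                  rintro rfl; exact G.irrefl hGuv
                refine ⟨(v, b), Or.inl hGuv, ?_⟩
                rw [move_other g (fun h => hvu (congrArg Prod.fst h))
                  (fun h => hvu (congrArg Prod.fst h))]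
                exact hgpos v hcv
              · have hzy : z ≠ y := fun h => hxp (by rw [h])
                refine ⟨(w, y), Or.inr ⟨rfl, hcomp z y hzy⟩, ?_⟩
                rw [move_tgt]; omega
          · have hxub : ((w, z) : α × β) ≠ (u, b) := fun h => hwu (congrArg Prod.fst h)
            have hgx : g (w, z) = 0 := by rw [move_other g hxp hxub] at hx; exact hx
            obtain ⟨r, hr, hr0⟩ := hgdom (w, z) hgx
            by_cases hrub : r = ((u, b) : α × β)
            · subst hrub
              have hGwu : G.Adj w u := by
                rcases (hadj _ _).1 hr with h' | ⟨h', _⟩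
                · exact h'
                · exact absurd h' hwu
              refine ⟨(u, y), Or.inl hGwu, ?_⟩
              rw [move_tgt]; omega
            · refine ⟨r, hr, ?_⟩
              have hrp : r ≠ ((u, y) : α × β) := by
                intro h; rw [h, hp] at hr0; omega
              rw [move_other g hrp hrub]
              exact hr0
      · -- col u ≥ 2 : easy case
        refine ⟨(u, b), hpadj, hgpos u (by omega), ?_⟩
        exact isWDom_move_of_two (isWDom_iff.2 ⟨hgle, hgdom⟩) (by rw [hgb]; omega)
  -- assemble
  have hgsecure : IsSecureWDom (lexProd G H) [1, 0, 0] g :=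
    ⟨isWDom_iff.2 ⟨hgle, hgdom⟩, hgsec⟩
  have hcols : ∀ u, (∑ y, g (u, y)) = min (col u) 2 := by
    intro u
    rw [hgdef]
    simp [Finset.sum_ite_eq']
  have hwle : weight g ≤ weight f₀ := by
    unfold weight
    rw [Fintype.sum_prod_type, Fintype.sum_prod_type]
    refine Finset.sum_le_sum fun u _ => ?_
    rw [show (∑ y, g (u, y)) = min (col u) 2 from hcols u]
    exact min_le_left _ _
  have hmemg : weight g ∈ {k | ∃ f, IsSecureWDom (lexProd G H) [1, 0, 0] f ∧ weight f = k} :=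
    ⟨g, hgsecure, rfl⟩
  have hge : secWDomNum (lexProd G H) [1, 0, 0] ≤ weight g := Nat.sInf_le hmemg
  have hfe : weight f₀ = secWDomNum (lexProd G H) [1, 0, 0] := hf₀w
  refine ⟨g, hgsecure, by omega, fun u => ?_⟩
  rw [hcols u]
  exact min_le_right _ _
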